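/- Assume f₀ : 𝒳ⁿ → ℝⁿ is Lipschitz on bounded sets with f₀(0) = 0. Suppose there exist a continuously differentiable V : ℝⁿ → [0,∞) and constants a₁, a₂, p > 0 with a₁|z|ᵖ ≤ V(z) ≤ a₂|z|ᵖ for all z ∈ ℝⁿ, and constants a, b > 0 such that for all φ ∈ 𝒳ⁿ: ∇V(φ(0)) · f₀(φ) ≤ −a V(φ(0)) + b max_{τ∈[-Δ,0]} V(φ(τ)). If a > b, then the system ẋ(t) = f₀(x_t) is GES. -/

import Mathlib

open Set Filter MeasureTheory Topology
open scoped NNReal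

noncomputable section

/-- `ℝⁿ` with the Euclidean norm. -/
abbrev Vec (n : ℕ) : Type := EuclideanSpace ℝ (Fin n)

/-- The state space `𝒳ⁿ = C([-Δ,0], ℝⁿ)`, equipped with the sup norm. -/
abbrev Hist (Δ : ℝ≥0) (n : ℕ) : Type :=
  ContinuousMap (Icc (-(Δ : ℝ)) (0 : ℝ)) (Vec n)

theorem zero_mem_IccD (Δ : ℝ≥0) : (0 : ℝ) ∈ Icc (-(Δ : ℝ)) (0 : ℝ) :=
  ⟨neg_nonpos.mpr Δ.coe_nonneg, le_refl 0⟩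

/-- `φ(0)`: the current value of a history segment. -/
def ev0 {Δ : ℝ≥0} {n : ℕ} (φ : Hist Δ n) : Vec n :=
  φ ⟨0, zero_mem_IccD Δ⟩

/-! ### Comparison functions -/

/-- Class `𝒦`: continuous, strictly increasing, zero at zero (on `[0,∞)`). -/
def ClassK (α : ℝ → ℝ) : Prop :=
  ContinuousOn α (Ici 0) ∧ StrictMonoOn α (Ici 0) ∧ α 0 = 0

/-- Class `𝒦∞`: class `𝒦` and unbounded. -/
def ClassKinf (α : ℝ → ℝ) : Prop :=
  ClassK α ∧ Tendsto α atTop atTop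

/-- Class `𝒩`: continuous, nondecreasing, zero at zero (on `[0,∞)`). -/
def ClassN (α : ℝ → ℝ) : Prop :=
  ContinuousOn α (Ici 0) ∧ MonotoneOn α (Ici 0) ∧ α 0 = 0

/-- Class `𝒫`: continuous, zero at zero, positive on `(0,∞)`. -/
def ClassP (α : ℝ → ℝ) : Prop :=
  ContinuousOn α (Ici 0) ∧ α 0 = 0 ∧ ∀ s : ℝ, 0 < s → 0 < α s

/-- Class `𝒦ℒ`. -/
def ClassKL (β : ℝ → ℝ → ℝ) : Prop :=
  (∀ t : ℝ, 0 ≤ t → ClassK fun s => β s t) ∧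
    ∀ s : ℝ, 0 ≤ s →
      ContinuousOn (β s) (Ici 0) ∧ AntitoneOn (β s) (Ici 0) ∧
        Tendsto (β s) atTop (𝓝 0)

/-! ### Inputs -/

/-- Admissible input: Lebesgue measurable and locally essentially bounded. -/
def IsInput {m : ℕ} (u : ℝ → Vec m) : Prop :=
  Measurable u ∧ ∀ T : ℝ, 0 < T → ∃ C : ℝ, ∀ᵐ t ∂volume, t ∈ Icc (0 : ℝ) T → ‖u t‖ ≤ C

/-- Essential supremum of `‖u‖` over a set of times. -/
def essBnd {m : ℕ} (u : ℝ → Vec m) (s : Set ℝ) : ℝ :=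
  sInf {C : ℝ | 0 ≤ C ∧ ∀ᵐ τ ∂volume, τ ∈ s → ‖u τ‖ ≤ C}

/-! ### History segments along a trajectory -/

-- The history segment `x_t ∈ 𝒳ⁿ` of a trajectory `x : ℝ → ℝⁿ` (with junk value `0`
-- when `x` is not continuous on `[t-Δ, t]`).
open Classical in
def seg (Δ : ℝ≥0) {n : ℕ} (x : ℝ → Vec n) (t : ℝ) : Hist Δ n :=
  if hx : ContinuousOn x (Icc (t - (Δ : ℝ)) t) then
    { toFun := fun τ => x (t + τ.1)
      continuous_toFun := by
        have h1 : Continuous fun τ : Icc (-(Δ : ℝ)) (0 : ℝ) => t + τ.1 :=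
          continuous_const.add continuous_subtype_val
        have h2 : ∀ τ : Icc (-(Δ : ℝ)) (0 : ℝ), t + τ.1 ∈ Icc (t - (Δ : ℝ)) t := by
          rintro ⟨τ, hτ⟩
          rw [mem_Icc] at hτ ⊢
          constructor
          · linarith [hτ.1]
          · linarith [hτ.2]
        exact hx.comp_continuous h1 h2 }
  else 0

/-! ### Driver's derivative and Dini derivative -/

/-- The deformed history `φ_{h,w}` appearing in Driver's derivative: for `0 ≤ h < Δ`,
`φ_{h,w}(s) = φ(s+h)` for `s ∈ [-Δ,-h)` and `φ_{h,w}(s) = φ(0) + w(h+s)` for `s ∈ [-h,0]`. -/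
def shiftSeg {Δ : ℝ≥0} {n : ℕ} (φ : Hist Δ n) (w : Vec n) (h : ℝ) : Hist Δ n :=
  { toFun := fun s =>
      φ (projIcc (-(Δ : ℝ)) 0 (neg_nonpos.mpr Δ.coe_nonneg) (s.1 + h)) + max (h + s.1) 0 • w
    continuous_toFun := by
      refine Continuous.add ?_ ?_
      · exact φ.continuous.comp (continuous_projIcc.comp
          (continuous_subtype_val.add continuous_const))
      · exact ((continuous_const.add continuous_subtype_val).max continuous_const).smul
          continuous_const }

/-- Driver's derivative `D⁺V(φ,w)`, valued in the extended reals. -/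
def driverD {Δ : ℝ≥0} {n : ℕ} (V : Hist Δ n → ℝ) (φ : Hist Δ n) (w : Vec n) : EReal :=
  limsup (fun h : ℝ => (((V (shiftSeg φ w h) - V φ) / h : ℝ) : EReal)) (𝓝[>] (0 : ℝ))

/-- Upper right-hand Dini derivative of `ν : ℝ → ℝ`, valued in the extended reals. -/
def diniD (ν : ℝ → ℝ) (t : ℝ) : EReal :=
  limsup (fun h : ℝ => (((ν (t + h) - ν t) / h : ℝ) : EReal)) (𝓝[>] (0 : ℝ))

/-! ### Lipschitz conditions -/

/-- `f : 𝒳ⁿ × ℝᵐ → ℝⁿ` is Lipschitz on bounded sets. -/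
def LipOnBounded {Δ : ℝ≥0} {n m : ℕ} (f : Hist Δ n → Vec m → Vec n) : Prop :=
  ∀ r : ℝ, 0 < r → ∃ L : ℝ, 0 < L ∧
    ∀ (φ₁ φ₂ : Hist Δ n) (v₁ v₂ : Vec m),
      ‖φ₁‖ ≤ r → ‖φ₂‖ ≤ r → ‖v₁‖ ≤ r → ‖v₂‖ ≤ r →
        ‖f φ₁ v₁ - f φ₂ v₂‖ ≤ L * (‖φ₁ - φ₂‖ + ‖v₁ - v₂‖)

/-- An input-free vector field `f₀ : 𝒳ⁿ → ℝⁿ` Lipschitz on bounded sets. -/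
def LipOnBounded₀ {Δ : ℝ≥0} {n : ℕ} (f₀ : Hist Δ n → Vec n) : Prop :=
  ∀ r : ℝ, 0 < r → ∃ L : ℝ, 0 < L ∧
    ∀ φ₁ φ₂ : Hist Δ n, ‖φ₁‖ ≤ r → ‖φ₂‖ ≤ r → ‖f₀ φ₁ - f₀ φ₂‖ ≤ L * ‖φ₁ - φ₂‖

/-- A functional `V : 𝒳ⁿ → ℝ` Lipschitz on bounded sets. -/
def LipOnBoundedV {Δ : ℝ≥0} {n : ℕ} (V : Hist Δ n → ℝ) : Prop :=
  ∀ r : ℝ, 0 < r → ∃ L : ℝ, 0 < L ∧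
    ∀ φ₁ φ₂ : Hist Δ n, ‖φ₁‖ ≤ r → ‖φ₂‖ ≤ r → |V φ₁ - V φ₂| ≤ L * ‖φ₁ - φ₂‖

/-- A functional `V : 𝒳ⁿ → ℝ` locally Lipschitz. -/
def LocallyLipV {Δ : ℝ≥0} {n : ℕ} (V : Hist Δ n → ℝ) : Prop :=
  ∀ φ : Hist Δ n, ∃ δ : ℝ, 0 < δ ∧ ∃ L : ℝ, 0 < L ∧
    ∀ φ₁ φ₂ : Hist Δ n, ‖φ₁ - φ‖ ≤ δ → ‖φ₂ - φ‖ ≤ δ → |V φ₁ - V φ₂| ≤ L * ‖φ₁ - φ₂‖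

/-! ### Solutions -/

/-- `x` is a solution of `ẋ(t) = f(x_t, u(t))` with initial state `x₀` on `[0, tmax)`. -/
structure IsSolution (Δ : ℝ≥0) {n m : ℕ} (f : Hist Δ n → Vec m → Vec n)
    (u : ℝ → Vec m) (x₀ : Hist Δ n) (tmax : EReal) (x : ℝ → Vec n) : Prop where
  tmax_pos : 0 < tmax
  cont : ContinuousOn x {s : ℝ | -(Δ : ℝ) ≤ s ∧ (s : EReal) < tmax}
  init : ∀ τ : Icc (-(Δ : ℝ)) (0 : ℝ), x τ.1 = x₀ τ
  integrable : ∀ t : ℝ, 0 ≤ t → (t : EReal) < tmax →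
    IntervalIntegrable (fun s => f (seg Δ x s) (u s)) volume 0 t
  integral_eq : ∀ t : ℝ, 0 ≤ t → (t : EReal) < tmax →
    x t = x 0 + ∫ s in (0:ℝ)..t, f (seg Δ x s) (u s)

/-- Maximal solution: a solution admitting no proper extension. -/
def IsMaxSolution (Δ : ℝ≥0) {n m : ℕ} (f : Hist Δ n → Vec m → Vec n)
    (u : ℝ → Vec m) (x₀ : Hist Δ n) (tmax : EReal) (x : ℝ → Vec n) : Prop :=
  IsSolution Δ f u x₀ tmax x ∧
    ∀ (tmax' : EReal) (x' : ℝ → Vec n), IsSolution Δ f u x₀ tmax' x' →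
      (∀ t : ℝ, -(Δ : ℝ) ≤ t → (t : EReal) < tmax → x' t = x t) → tmax' ≤ tmax

/-- Solution of the input-free system `ẋ(t) = f₀(x_t)`. -/
def IsSolution₀ (Δ : ℝ≥0) {n : ℕ} (f₀ : Hist Δ n → Vec n) (x₀ : Hist Δ n)
    (tmax : EReal) (x : ℝ → Vec n) : Prop :=
  IsSolution Δ (fun φ (_ : Vec 0) => f₀ φ) (fun _ => 0) x₀ tmax x

/-- Maximal solution of the input-free system `ẋ(t) = f₀(x_t)`. -/
def IsMaxSolution₀ (Δ : ℝ≥0) {n : ℕ} (f₀ : Hist Δ n → Vec n) (x₀ : Hist Δ n)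
    (tmax : EReal) (x : ℝ → Vec n) : Prop :=
  IsMaxSolution Δ (fun φ (_ : Vec 0) => f₀ φ) (fun _ => 0) x₀ tmax x

/-! ### Stability properties (input-free systems) -/

/-- Global asymptotic stability (GAS). -/
def GAS (Δ : ℝ≥0) {n : ℕ} (f₀ : Hist Δ n → Vec n) : Prop :=
  ∃ β : ℝ → ℝ → ℝ, ClassKL β ∧
    ∀ (x₀ : Hist Δ n) (tmax : EReal) (x : ℝ → Vec n),
      IsMaxSolution₀ Δ f₀ x₀ tmax x →
        tmax = ⊤ ∧ ∀ t : ℝ, 0 ≤ t → ‖x t‖ ≤ β ‖x₀‖ t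

/-- Global exponential stability (GES). -/
def GES (Δ : ℝ≥0) {n : ℕ} (f₀ : Hist Δ n → Vec n) : Prop :=
  ∃ k : ℝ, 1 ≤ k ∧ ∃ lam : ℝ, 0 < lam ∧
    ∀ (x₀ : Hist Δ n) (tmax : EReal) (x : ℝ → Vec n),
      IsMaxSolution₀ Δ f₀ x₀ tmax x →
        tmax = ⊤ ∧ ∀ t : ℝ, 0 ≤ t → ‖x t‖ ≤ k * ‖x₀‖ * Real.exp (-lam * t)

/-- (Local) asymptotic stability (AS) of the origin. -/
def AS (Δ : ℝ≥0) {n : ℕ} (f₀ : Hist Δ n → Vec n) : Prop :=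
  ∃ r : ℝ, 0 < r ∧ ∃ β : ℝ → ℝ → ℝ, ClassKL β ∧
    ∀ (x₀ : Hist Δ n) (tmax : EReal) (x : ℝ → Vec n),
      IsMaxSolution₀ Δ f₀ x₀ tmax x → ‖x₀‖ ≤ r →
        tmax = ⊤ ∧ ∀ t : ℝ, 0 ≤ t → ‖x t‖ ≤ β ‖x₀‖ t

/-- (Local) exponential stability (ES) of the origin. -/
def ES (Δ : ℝ≥0) {n : ℕ} (f₀ : Hist Δ n → Vec n) : Prop :=
  ∃ r : ℝ, 0 < r ∧ ∃ k : ℝ, 1 ≤ k ∧ ∃ lam : ℝ, 0 < lam ∧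
    ∀ (x₀ : Hist Δ n) (tmax : EReal) (x : ℝ → Vec n),
      IsMaxSolution₀ Δ f₀ x₀ tmax x → ‖x₀‖ ≤ r →
        tmax = ⊤ ∧ ∀ t : ℝ, 0 ≤ t → ‖x t‖ ≤ k * ‖x₀‖ * Real.exp (-lam * t)

/-! ### Forward completeness -/

/-- Robust forward completeness (RFC) of `ẋ(t) = f(x_t,u(t))`. -/
def RFC (Δ : ℝ≥0) {n m : ℕ} (f : Hist Δ n → Vec m → Vec n) : Prop :=
  (∀ (x₀ : Hist Δ n) (u : ℝ → Vec m) (tmax : EReal) (x : ℝ → Vec n),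
      IsInput u → IsMaxSolution Δ f u x₀ tmax x → tmax = ⊤) ∧
    ∀ T : ℝ, 0 < T → ∀ r : ℝ, 0 < r → ∃ C : ℝ,
      ∀ (x₀ : Hist Δ n) (u : ℝ → Vec m) (tmax : EReal) (x : ℝ → Vec n),
        IsInput u → IsMaxSolution Δ f u x₀ tmax x →
          ‖x₀‖ ≤ r → essBnd u (Ici 0) ≤ r →
            ∀ t : ℝ, t ∈ Icc (0 : ℝ) T → ‖seg Δ x t‖ ≤ C

/-- Robust forward completeness of the input-free system `ẋ(t) = f₀(x_t)`. -/
def RFC₀ (Δ : ℝ≥0) {n : ℕ} (f₀ : Hist Δ n → Vec n) : Prop :=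
  RFC Δ (fun φ (_ : Vec 0) => f₀ φ)

/-! ### Input-to-state stability notions -/

/-- Input-to-state stability (ISS). -/
def ISS (Δ : ℝ≥0) {n m : ℕ} (f : Hist Δ n → Vec m → Vec n) : Prop :=
  ∃ β : ℝ → ℝ → ℝ, ∃ μ : ℝ → ℝ, ClassKL β ∧ ClassN μ ∧
    ∀ (x₀ : Hist Δ n) (u : ℝ → Vec m) (tmax : EReal) (x : ℝ → Vec n),
      IsInput u → IsMaxSolution Δ f u x₀ tmax x →
        tmax = ⊤ ∧ ∀ t : ℝ, 0 ≤ t → ‖x t‖ ≤ β ‖x₀‖ t + μ (essBnd u (Icc 0 t))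

/-- Local input-to-state stability (LISS). -/
def LISS (Δ : ℝ≥0) {n m : ℕ} (f : Hist Δ n → Vec m → Vec n) : Prop :=
  ∃ r : ℝ, 0 < r ∧ ∃ β : ℝ → ℝ → ℝ, ∃ μ : ℝ → ℝ, ClassKL β ∧ ClassN μ ∧
    ∀ (x₀ : Hist Δ n) (u : ℝ → Vec m) (tmax : EReal) (x : ℝ → Vec n),
      IsInput u → IsMaxSolution Δ f u x₀ tmax x →
        ‖x₀‖ ≤ r → essBnd u (Ici 0) ≤ r →
          tmax = ⊤ ∧ ∀ t : ℝ, 0 ≤ t → ‖x t‖ ≤ β ‖x₀‖ t + μ (essBnd u (Icc 0 t))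

/-- Integral input-to-state stability (iISS). -/
def iISS (Δ : ℝ≥0) {n m : ℕ} (f : Hist Δ n → Vec m → Vec n) : Prop :=
  ∃ β : ℝ → ℝ → ℝ, ∃ η μ : ℝ → ℝ, ClassKL β ∧ ClassN η ∧ ClassN μ ∧
    ∀ (x₀ : Hist Δ n) (u : ℝ → Vec m) (tmax : EReal) (x : ℝ → Vec n),
      IsInput u → IsMaxSolution Δ f u x₀ tmax x →
        tmax = ⊤ ∧ ∀ t : ℝ, 0 ≤ t →
          ‖x t‖ ≤ β ‖x₀‖ t + η (∫ s in (0:ℝ)..t, μ ‖u s‖)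

/-- The UBEBS estimate with offset `c`. -/
def UBEBSwith (Δ : ℝ≥0) {n m : ℕ} (f : Hist Δ n → Vec m → Vec n) (c : ℝ) : Prop :=
  ∃ α ξ ζ : ℝ → ℝ, ClassKinf α ∧ ClassKinf ξ ∧ ClassKinf ζ ∧
    ∀ (x₀ : Hist Δ n) (u : ℝ → Vec m) (tmax : EReal) (x : ℝ → Vec n),
      IsInput u → IsMaxSolution Δ f u x₀ tmax x →
        tmax = ⊤ ∧ ∀ t : ℝ, 0 ≤ t →
          α ‖x t‖ ≤ ξ ‖x₀‖ + (∫ s in (0:ℝ)..t, ζ ‖u s‖) + c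

/-! ### Lyapunov–Krasovskii functionals -/

/-- Lyapunov–Krasovskii functional candidate (LKF). -/
def IsLKF {Δ : ℝ≥0} {n : ℕ} (V : Hist Δ n → ℝ) : Prop :=
  (∀ φ, 0 ≤ V φ) ∧ LipOnBoundedV V ∧
    ∃ α₁ α₂ : ℝ → ℝ, ClassKinf α₁ ∧ ClassKinf α₂ ∧
      ∀ φ : Hist Δ n, α₁ ‖ev0 φ‖ ≤ V φ ∧ V φ ≤ α₂ ‖φ‖

/-- Coercive Lyapunov–Krasovskii functional candidate. -/
def IsCoerciveLKF {Δ : ℝ≥0} {n : ℕ} (V : Hist Δ n → ℝ) : Prop :=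
  (∀ φ, 0 ≤ V φ) ∧ LipOnBoundedV V ∧
    ∃ α₁ α₂ : ℝ → ℝ, ClassKinf α₁ ∧ ClassKinf α₂ ∧
      ∀ φ : Hist Δ n, α₁ ‖φ‖ ≤ V φ ∧ V φ ≤ α₂ ‖φ‖

end

noncomputable section
open Set Filter MeasureTheory Topology
open scoped NNReal

variable {Δ : ℝ≥0} {n : ℕ}

instance IccD_nonempty (Δ : ℝ≥0) : Nonempty (Icc (-(Δ : ℝ)) (0 : ℝ)) :=
  ⟨⟨0, zero_mem_IccD Δ⟩⟩

lemma f0_cont {f₀ : Hist Δ n → Vec n} (hf : LipOnBounded₀ f₀) : Continuous f₀ := by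
  rw [continuous_iff_continuousAt]
  intro φ
  obtain ⟨L, hL, hLip⟩ := hf (‖φ‖ + 1) (by positivity)
  rw [Metric.continuousAt_iff]
  intro ε hε
  refine ⟨min 1 (ε / (2 * L)), by positivity, fun {ψ} hψ => ?_⟩
  have h1 : ‖ψ - φ‖ < min 1 (ε / (2 * L)) := by rwa [dist_eq_norm] at hψ
  have hψn : ‖ψ‖ ≤ ‖φ‖ + 1 := by
    have h2 := norm_sub_norm_le ψ φ
    have h3 := lt_of_lt_of_le h1 (min_le_left _ _)
    linarith
  rw [dist_eq_norm]
  have hkey : L * (ε / (2 * L)) = ε / 2 := by field_simp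
  calc ‖f₀ ψ - f₀ φ‖ ≤ L * ‖ψ - φ‖ := hLip ψ φ hψn (by linarith)
    _ ≤ L * (ε / (2 * L)) := by
        have := lt_of_lt_of_le h1 (min_le_right _ _)
        nlinarith [norm_nonneg (ψ - φ)]
    _ < ε := by rw [hkey]; linarith

lemma f0_norm_le {f₀ : Hist Δ n → Vec n} (hf0 : f₀ 0 = 0) {L r : ℝ}
    (hLip : ∀ φ₁ φ₂ : Hist Δ n, ‖φ₁‖ ≤ r → ‖φ₂‖ ≤ r → ‖f₀ φ₁ - f₀ φ₂‖ ≤ L * ‖φ₁ - φ₂‖)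
    (hr : 0 ≤ r) {φ : Hist Δ n} (hφ : ‖φ‖ ≤ r) : ‖f₀ φ‖ ≤ L * ‖φ‖ := by
  have := hLip φ 0 hφ (by simpa using hr)
  simpa [hf0] using this

lemma seg_apply {g : ℝ → Vec n} (hg : Continuous g) (t : ℝ)
    (τ : Icc (-(Δ : ℝ)) (0 : ℝ)) : seg Δ g t τ = g (t + τ.1) := by
  rw [seg, dif_pos hg.continuousOn]
  rfl

lemma seg_eq_of_eqOn {g x : ℝ → Vec n} (hg : Continuous g) (t : ℝ)
    (h : ∀ r ∈ Icc (t - (Δ : ℝ)) t, x r = g r) : seg Δ x t = seg Δ g t := by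
  have hx : ContinuousOn x (Icc (t - (Δ : ℝ)) t) := hg.continuousOn.congr h
  rw [seg, dif_pos hx]
  refine ContinuousMap.ext fun τ => ?_
  rw [seg_apply hg]
  show x (t + τ.1) = g (t + τ.1)
  exact h _ (mem_Icc.mpr ⟨by linarith [τ.2.1], by linarith [τ.2.2]⟩)

lemma continuous_seg {g : ℝ → Vec n} (hg : Continuous g) :
    Continuous (seg Δ g) := by
  have key : seg Δ g = fun t => (ContinuousMap.curry
      (ContinuousMap.mk (fun p : ℝ × Icc (-(Δ : ℝ)) (0 : ℝ) => g (p.1 + p.2.1))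
        (hg.comp (continuous_fst.add (continuous_subtype_val.comp continuous_snd))))) t := by
    funext t
    refine ContinuousMap.ext fun τ => ?_
    rw [seg_apply hg]
    rfl
  rw [key]
  exact (ContinuousMap.curry _).continuous

lemma norm_seg_le {g : ℝ → Vec n} (hg : Continuous g) {t C : ℝ} (hC : 0 ≤ C)
    (h : ∀ r ∈ Icc (t - (Δ : ℝ)) t, ‖g r‖ ≤ C) : ‖seg Δ g t‖ ≤ C := by
  rw [ContinuousMap.norm_le _ hC]
  intro τ
  rw [seg_apply hg]
  exact h _ (mem_Icc.mpr ⟨by linarith [τ.2.1], by linarith [τ.2.2]⟩)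

lemma ev0_seg {g : ℝ → Vec n} (hg : Continuous g) (t : ℝ) :
    ev0 (seg Δ g t) = g t := by
  rw [ev0, seg_apply hg]
  norm_num

lemma continuous_glue {E : Type*} [TopologicalSpace E] {f g : ℝ → E} {c : ℝ}
    (hf : ContinuousOn f (Iio c)) (hlim : Tendsto f (𝓝[<] c) (𝓝 (g c)))
    (hg : ContinuousOn g (Ici c)) :
    Continuous (fun t => if t < c then f t else g t) := by
  rw [continuous_iff_continuousAt]
  intro t
  rcases lt_trichotomy t c with h | h | h
  · have he : (fun t => if t < c then f t else g t) =ᶠ[𝓝 t] f := by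
      filter_upwards [Iio_mem_nhds h] with r hr
      exact if_pos hr
    exact ContinuousAt.congr (hf.continuousAt (Iio_mem_nhds h)) he.symm
  · rw [h]
    have key : Tendsto (fun r => if r < c then f r else g r) (𝓝 c) (𝓝 (g c)) := by
      rw [← nhdsLT_sup_nhdsGE c, tendsto_sup]
      constructor
      · apply Tendsto.congr' _ hlim
        filter_upwards [self_mem_nhdsWithin] with r hr
        exact (if_pos hr).symm
      · apply Tendsto.congr' _ (hg c Set.self_mem_Ici)
        filter_upwards [self_mem_nhdsWithin] with r (hr : c ≤ r)
        exact (if_neg (not_lt.mpr hr)).symm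
    show Tendsto _ (𝓝 c) (𝓝 (if c < c then f c else g c))
    rwa [if_neg (lt_irrefl c)]
  · have he : (fun t => if t < c then f t else g t) =ᶠ[𝓝 t] g := by
      filter_upwards [Ioi_mem_nhds h] with r (hr : c < r)
      exact if_neg (not_lt.mpr hr.le)
    exact ContinuousAt.congr (hg.continuousAt (Ici_mem_nhds h)) he.symm

end
noncomputable section
open Set Filter MeasureTheory Topology

lemma halanay_aux {a b lam DR T K : ℝ} (hlam : 0 < lam) (hb : 0 ≤ b) (hK : 0 ≤ K)
    (hcmp : -a + b * Real.exp (lam * DR) < -lam)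
    {v : ℝ → ℝ} (hv : Continuous v)
    (hv0 : ∀ r : ℝ, r ≤ 0 → v r ≤ K)
    (hvd : ∀ t : ℝ, 0 < t → t ≤ T → ∃ D : ℝ, HasDerivAt v D t ∧
      ∀ C : ℝ, (∀ r : ℝ, t - DR ≤ r → r ≤ t → v r ≤ C) → D ≤ -a * v t + b * C) :
    ∀ t : ℝ, 0 ≤ t → t ≤ T → v t ≤ K * Real.exp (-lam * t) := by
  have main : ∀ ε : ℝ, 0 < ε → ∀ t : ℝ, 0 ≤ t → t ≤ T →
      v t < (K + ε) * Real.exp (-lam * t) := by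
    intro ε hε
    by_contra hcon
    push_neg at hcon
    obtain ⟨t₁, ht₁0, ht₁T, ht₁⟩ := hcon
    set B : ℝ → ℝ := fun t => (K + ε) * Real.exp (-lam * t) with hB
    have hBc : Continuous B := by fun_prop
    set S : Set ℝ := Icc 0 T ∩ {t | B t ≤ v t} with hS
    have hSne : S.Nonempty := ⟨t₁, ⟨ht₁0, ht₁T⟩, ht₁⟩
    have hScl : IsClosed S := isClosed_Icc.inter (isClosed_le hBc hv)
    have hSbd : BddBelow S := (bddBelow_Icc : BddBelow (Icc (0:ℝ) T)).mono
      (inter_subset_left)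
    set c := sInf S with hc
    have hcS : c ∈ S := hScl.csInf_mem hSne hSbd
    have hc0 : 0 ≤ c := hcS.1.1
    have hcT : c ≤ T := hcS.1.2
    have hcpos : 0 < c := by
      rcases hc0.lt_or_eq with h | h
      · exact h
      · exfalso
        have hv0' : v 0 ≤ K := hv0 0 le_rfl
        have : B 0 ≤ v 0 := by rw [← h] at hcS; exact hcS.2
        simp only [hB, mul_zero, neg_zero, Real.exp_zero, mul_one] at this
        linarith
    have hlt : ∀ r : ℝ, 0 ≤ r → r < c → v r < B r := by
      intro r hr0 hrc
      by_contra hcon2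
      push_neg at hcon2
      have : r ∈ S := ⟨⟨hr0, hrc.le.trans hcT⟩, hcon2⟩
      exact absurd (csInf_le hSbd this) (not_le.mpr hrc)
    -- v c = B c
    have hvcle : v c ≤ B c := by
      have h1 : Tendsto v (𝓝[<] c) (𝓝 (v c)) :=
        (hv.tendsto c).mono_left nhdsWithin_le_nhds
      have h2 : Tendsto B (𝓝[<] c) (𝓝 (B c)) :=
        (hBc.tendsto c).mono_left nhdsWithin_le_nhds
      refine le_of_tendsto_of_tendsto h1 h2 ?_
      filter_upwards [Ioo_mem_nhdsLT_of_mem (show c ∈ Ioc 0 c from ⟨hcpos, le_rfl⟩)]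
        with r hr
      exact (hlt r hr.1.le hr.2).le
    have hvc : v c = B c := le_antisymm hvcle hcS.2
    have hBcpos : 0 < B c := by positivity
    -- derivative comparison at c
    obtain ⟨D, hD, hDle⟩ := hvd c hcpos hcT
    have hCbound : ∀ r : ℝ, c - DR ≤ r → r ≤ c →
        v r ≤ (K + ε) * Real.exp (-lam * (c - DR)) := by
      intro r hr1 hr2
      rcases le_or_gt r 0 with h | h
      · have h1 : v r ≤ K := hv0 r h
        have h2 : (1:ℝ) ≤ Real.exp (-lam * (c - DR)) := by
          rw [Real.one_le_exp_iff]
          nlinarith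
        nlinarith
      · have h1 : v r ≤ B r := by
          rcases hr2.lt_or_eq with h' | h'
          · exact (hlt r h.le h').le
          · rw [h', hvc]
        refine h1.trans ?_
        show (K + ε) * Real.exp (-lam * r) ≤ _
        have : Real.exp (-lam * r) ≤ Real.exp (-lam * (c - DR)) := by
          rw [Real.exp_le_exp]
          nlinarith
        nlinarith
    have hDlt : D < -lam * B c := by
      have h1 := hDle _ hCbound
      have hexp : (K + ε) * Real.exp (-lam * (c - DR)) = B c * Real.exp (lam * DR) := by
        rw [hB]
        simp only
        rw [mul_assoc, ← Real.exp_add]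
        ring_nf
      rw [hvc, hexp] at h1
      calc D ≤ -a * B c + b * (B c * Real.exp (lam * DR)) := h1
        _ = (-a + b * Real.exp (lam * DR)) * B c := by ring
        _ < -lam * B c := by
            apply mul_lt_mul_of_pos_right hcmp hBcpos
    -- B has derivative -lam * B c at c
    have hBd : HasDerivAt B ((K + ε) * (Real.exp (-lam * c) * -lam)) c := by
      have h1 : HasDerivAt (fun t : ℝ => -lam * t) (-lam) c := by
        simpa using (hasDerivAt_id c).const_mul (-lam)
      exact (h1.exp).const_mul (K + ε)
    have hBd' : HasDerivAt B (-lam * B c) c := by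
      convert hBd using 1
      rw [hB]
      ring
    -- h := v - B has derivative D - (-lam * B c) < 0 at c, h c = 0, h < 0 left of c
    have hhd : HasDerivAt (fun r => v r - B r) (D - -lam * B c) c := hD.sub hBd'
    have hneg : D - -lam * B c < 0 := by linarith
    have hslope : Tendsto (slope (fun r => v r - B r) c) (𝓝[<] c)
        (𝓝 (D - -lam * B c)) :=
      ((hasDerivAt_iff_tendsto_slope.mp hhd).mono_left
        (nhdsWithin_mono c fun r hr => ne_of_lt hr))
    have hev1 : ∀ᶠ r in 𝓝[<] c, slope (fun r => v r - B r) c r < 0 :=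
      hslope.eventually_lt_const hneg
    have hev2 : ∀ᶠ r in 𝓝[<] c, r ∈ Ioo 0 c :=
      Ioo_mem_nhdsLT_of_mem ⟨hcpos, le_rfl⟩
    obtain ⟨r, hr1, hr2⟩ := (hev1.and hev2).exists
    have hvr : v r - B r < 0 := sub_neg.mpr (hlt r hr2.1.le hr2.2)
    have hslr : slope (fun r => v r - B r) c r =
        (v r - B r) / (r - c) := by
      rw [slope_def_field, hvc, sub_self, sub_zero]
    rw [hslr] at hr1
    have : 0 < (v r - B r) / (r - c) := div_pos_of_neg_of_neg hvr (by linarith [hr2.2])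
    linarith
  intro t ht0 htT
  have h1 : ∀ ε : ℝ, 0 < ε → v t ≤ K * Real.exp (-lam * t) + ε := by
    intro ε hε
    have h2 := (main ε hε t ht0 htT).le
    have h3 : Real.exp (-lam * t) ≤ 1 := by
      rw [Real.exp_le_one_iff]
      nlinarith
    nlinarith
  exact le_of_forall_pos_le_add h1

end
noncomputable section
open Set Filter MeasureTheory Topology
open scoped NNReal

variable {Δ : ℝ≥0} {n : ℕ}

lemma continuous_primitive_vec {F : ℝ → Vec n} (hF : Continuous F) :
    Continuous (fun t => ∫ s in (0:ℝ)..t, F s) := by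
  rw [continuous_iff_continuousAt]
  intro t
  exact (intervalIntegral.integral_hasDerivAt_right (hF.intervalIntegrable _ _)
    (hF.stronglyMeasurableAtFilter _ _) hF.continuousAt).continuousAt

lemma local_exist (Δ : ℝ≥0) {n : ℕ} (f₀ : Hist Δ n → Vec n)
    (hf : LipOnBounded₀ f₀) (hf0 : f₀ 0 = 0) (ψ : Hist Δ n) (R : ℝ)
    (hR : 0 ≤ R) (hψ : ‖ψ‖ ≤ R) :
    ∃ ε : ℝ, 0 < ε ∧ ∃ z : ℝ → Vec n, Continuous z ∧
      (∀ r : ℝ, r ≤ 0 →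
        z r = ψ (projIcc (-(Δ : ℝ)) 0 (neg_nonpos.mpr Δ.coe_nonneg) r)) ∧
      (∀ t : ℝ, 0 ≤ t → t ≤ ε →
        z t = ev0 ψ + ∫ s in (0:ℝ)..t, f₀ (seg Δ z s)) := by
  obtain ⟨L, hL, hLip⟩ := hf (R + 2) (by linarith)
  set M : ℝ := L * (R + 2) with hM
  have hMpos : 0 < M := by positivity
  set ε : ℝ := min (1 / (M + 1)) (1 / (2 * L)) with hε
  have hε0 : 0 < ε := by positivity
  have hεM : M * ε ≤ 1 := by
    calc M * ε ≤ M * (1 / (M + 1)) :=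
          mul_le_mul_of_nonneg_left (min_le_left _ _) hMpos.le
      _ ≤ 1 := by rw [mul_one_div, div_le_one (by positivity)]; linarith
  have hεL : L * ε < 1 := by
    have h2 : L * (1 / (2 * L)) = 1 / 2 := by field_simp
    calc L * ε ≤ L * (1 / (2 * L)) := mul_le_mul_of_nonneg_left (min_le_right _ _) hL.le
      _ < 1 := by rw [h2]; norm_num
  have h0ε : (0:ℝ) ∈ Icc (0:ℝ) ε := ⟨le_rfl, hε0.le⟩
  set ψ0 : Vec n := ev0 ψ with hψ0
  have hψ0n : ‖ψ0‖ ≤ R := (ContinuousMap.norm_coe_le_norm ψ _).trans hψ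
  set pΔ := projIcc (-(Δ : ℝ)) 0 (neg_nonpos.mpr Δ.coe_nonneg) with hpΔ
  set pε := projIcc (0:ℝ) ε hε0.le with hpε
  have hpΔ0 : ψ (pΔ 0) = ψ0 := by
    rw [hpΔ, projIcc_of_mem _ (zero_mem_IccD Δ)]; rfl
  -- the complete metric space
  set S : Set (C(Icc (0:ℝ) ε, Vec n)) :=
    {y | y ⟨0, h0ε⟩ = ψ0 ∧ ∀ t, ‖y t‖ ≤ R + 1} with hS
  have hSclosed : IsClosed S := by
    rw [hS, setOf_and]
    refine IsClosed.inter (isClosed_eq (continuous_eval_const _)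
      continuous_const) ?_
    rw [setOf_forall]
    exact isClosed_iInter fun t =>
      isClosed_le (continuous_eval_const t).norm continuous_const
  haveI : CompleteSpace S := hSclosed.completeSpace_coe
  haveI : Nonempty S := ⟨⟨ContinuousMap.const _ ψ0, by simp, fun t => by
    simp only [ContinuousMap.const_apply]; linarith⟩⟩
  -- the glued history function
  set glue : C(Icc (0:ℝ) ε, Vec n) → ℝ → Vec n :=
    fun y r => if r < 0 then ψ (pΔ r) else y (pε r) with hglue
  have hglue_cont : ∀ y : S, Continuous (glue y.1) := by
    rintro ⟨y, hy0, hyb⟩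
    refine continuous_glue ((map_continuous ψ).comp continuous_projIcc).continuousOn
      ?_ ((map_continuous y).comp continuous_projIcc).continuousOn
    have h1 : Tendsto (fun r => ψ (pΔ r)) (𝓝 0) (𝓝 (ψ (pΔ 0))) :=
      ((map_continuous ψ).comp continuous_projIcc).tendsto 0
    have h2 : y (pε 0) = ψ0 := by
      rw [hpε, projIcc_of_mem _ h0ε]; exact hy0
    rw [h2, ← hpΔ0]
    exact h1.mono_left nhdsWithin_le_nhds
  have hglue_norm : ∀ y : S, ∀ r : ℝ, ‖glue y.1 r‖ ≤ R + 1 := by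
    rintro ⟨y, hy0, hyb⟩ r
    by_cases h : r < 0
    · simp only [hglue, if_pos h]
      exact (ContinuousMap.norm_coe_le_norm ψ _).trans (by linarith)
    · simp only [hglue, if_neg h]
      exact hyb _
  have hseg_norm : ∀ y : S, ∀ s : ℝ, ‖seg Δ (glue y.1) s‖ ≤ R + 1 :=
    fun y s => norm_seg_le (hglue_cont y) (by linarith)
      (fun r _ => hglue_norm y r)
  set F : S → ℝ → Vec n := fun y s => f₀ (seg Δ (glue y.1) s) with hF
  have hFc : ∀ y : S, Continuous (F y) :=
    fun y => (f0_cont hf).comp (continuous_seg (hglue_cont y))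
  have hFnorm : ∀ y : S, ∀ s : ℝ, ‖F y s‖ ≤ M := by
    intro y s
    calc ‖F y s‖ ≤ L * ‖seg Δ (glue y.1) s‖ :=
          f0_norm_le hf0 hLip (by linarith) ((hseg_norm y s).trans (by linarith))
      _ ≤ L * (R + 2) := by
          have := hseg_norm y s
          nlinarith
  -- the Picard operator
  have hΦmem : ∀ y : S,
      (ContinuousMap.mk (fun t : Icc (0:ℝ) ε => ψ0 + ∫ s in (0:ℝ)..t.1, F y s)
        (continuous_const.add ((continuous_primitive_vec (hFc y)).comp
          continuous_subtype_val))) ∈ S := by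
    intro y
    constructor
    · show ψ0 + ∫ s in (0:ℝ)..(0:ℝ), F y s = ψ0
      rw [intervalIntegral.integral_same, add_zero]
    · intro t
      show ‖ψ0 + ∫ s in (0:ℝ)..t.1, F y s‖ ≤ R + 1
      have h1 : ‖∫ s in (0:ℝ)..t.1, F y s‖ ≤ M * |t.1 - 0| :=
        intervalIntegral.norm_integral_le_of_norm_le_const fun s _ => hFnorm y s
      rw [sub_zero, abs_of_nonneg t.2.1] at h1
      have h2 : M * t.1 ≤ M * ε := mul_le_mul_of_nonneg_left t.2.2 hMpos.le
      calc ‖ψ0 + ∫ s in (0:ℝ)..t.1, F y s‖ ≤ ‖ψ0‖ + ‖∫ s in (0:ℝ)..t.1, F y s‖ :=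
            norm_add_le _ _
        _ ≤ R + 1 := by linarith
  set Φ : S → S := fun y => ⟨_, hΦmem y⟩ with hΦ
  -- contraction
  have hcontr : ContractingWith (Real.toNNReal (L * ε)) Φ := by
    constructor
    · exact Real.toNNReal_lt_one.mpr hεL
    · apply LipschitzWith.of_dist_le_mul
      intro y₁ y₂
      rw [Real.coe_toNNReal _ (by positivity), Subtype.dist_eq]
      set D := dist y₁ y₂ with hD
      have hD0 : 0 ≤ D := dist_nonneg
      have hDC : dist (y₁ : C(Icc (0:ℝ) ε, Vec n)) (y₂ : C(Icc (0:ℝ) ε, Vec n)) = D :=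
        (Subtype.dist_eq y₁ y₂).symm
      rw [ContinuousMap.dist_le (by positivity)]
      intro t
      show dist (ψ0 + ∫ s in (0:ℝ)..t.1, F y₁ s) (ψ0 + ∫ s in (0:ℝ)..t.1, F y₂ s) ≤ _
      rw [dist_add_left, dist_eq_norm, ← intervalIntegral.integral_sub
        ((hFc y₁).intervalIntegrable _ _) ((hFc y₂).intervalIntegrable _ _)]
      have hptw : ∀ s ∈ Set.uIoc (0:ℝ) t.1, ‖F y₁ s - F y₂ s‖ ≤ L * D := by
        intro s _
        have hsegd : ‖seg Δ (glue y₁.1) s - seg Δ (glue y₂.1) s‖ ≤ D := by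
          rw [ContinuousMap.norm_le _ hD0]
          intro τ
          rw [ContinuousMap.sub_apply, seg_apply (hglue_cont y₁),
            seg_apply (hglue_cont y₂)]
          by_cases h : s + τ.1 < 0
          · simp only [hglue, if_pos h, sub_self, norm_zero]
            exact hD0
          · simp only [hglue, if_neg h]
            rw [← dist_eq_norm]
            exact (ContinuousMap.dist_apply_le_dist _).trans hDC.le
        calc ‖F y₁ s - F y₂ s‖ ≤ L * ‖seg Δ (glue y₁.1) s - seg Δ (glue y₂.1) s‖ :=
              hLip _ _ ((hseg_norm y₁ s).trans (by linarith))
                ((hseg_norm y₂ s).trans (by linarith))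
          _ ≤ L * D := mul_le_mul_of_nonneg_left hsegd hL.le
      have h1 : ‖∫ s in (0:ℝ)..t.1, (F y₁ s - F y₂ s)‖ ≤ L * D * |t.1 - 0| :=
        intervalIntegral.norm_integral_le_of_norm_le_const hptw
      rw [sub_zero, abs_of_nonneg t.2.1] at h1
      have h2 : L * D * t.1 ≤ L * D * ε :=
        mul_le_mul_of_nonneg_left t.2.2 (by positivity)
      calc ‖∫ s in (0:ℝ)..t.1, (F y₁ s - F y₂ s)‖ ≤ L * D * ε := h1.trans h2
        _ = L * ε * D := by ring
  -- fixed point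
  set y : S := ContractingWith.fixedPoint Φ hcontr with hy
  have hfix : Φ y = y := hcontr.fixedPoint_isFixedPt
  refine ⟨ε, hε0, glue y.1, hglue_cont y, ?_, ?_⟩
  · intro r hr
    rcases hr.lt_or_eq with h | h
    · simp only [hglue, if_pos h]
    · subst h
      simp only [hglue, if_neg (lt_irrefl (0:ℝ))]
      rw [show pε 0 = ⟨0, h0ε⟩ from projIcc_of_mem hε0.le h0ε, hpΔ0]
      exact y.2.1
  · intro t ht0 htε
    have h1 : glue y.1 t = (y : C(Icc (0:ℝ) ε, Vec n)) ⟨t, ht0, htε⟩ := by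
      simp only [hglue, if_neg (not_lt.mpr ht0)]
      rw [show pε t = ⟨t, ht0, htε⟩ from projIcc_of_mem hε0.le ⟨ht0, htε⟩]
    have h2 : ((Φ y : S) : C(Icc (0:ℝ) ε, Vec n)) ⟨t, ht0, htε⟩ =
        (y : C(Icc (0:ℝ) ε, Vec n)) ⟨t, ht0, htε⟩ := by rw [hfix]
    rw [h1, ← h2]
    rfl

end
noncomputable section
open Set Filter MeasureTheory Topology
open scoped NNReal

lemma sol_V_est (Δ : ℝ≥0) {n : ℕ} (f₀ : Hist Δ n → Vec n) (hf : LipOnBounded₀ f₀)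
    (V : Vec n → ℝ) (hV : ContDiff ℝ 1 V)
    (a₂ p : ℝ) (ha₂ : 0 < a₂) (hp : 0 < p)
    (hub : ∀ z : Vec n, V z ≤ a₂ * ‖z‖ ^ p)
    (a b lam : ℝ) (hb : 0 ≤ b) (hlam : 0 < lam)
    (hcmp : -a + b * Real.exp (lam * (Δ : ℝ)) < -lam)
    (hHal : ∀ φ : Hist Δ n, fderiv ℝ V (ev0 φ) (f₀ φ)
      ≤ -(a * V (ev0 φ)) + b * ⨆ τ : Icc (-(Δ : ℝ)) (0 : ℝ), V (φ τ))
    (x₀ : Hist Δ n) (tmax : EReal) (x : ℝ → Vec n)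
    (hsol : IsSolution Δ (fun φ (_ : Vec 0) => f₀ φ) (fun _ => 0) x₀ tmax x) :
    ∀ t : ℝ, 0 ≤ t → (t : EReal) < tmax →
      V (x t) ≤ (a₂ * ‖x₀‖ ^ p) * Real.exp (-lam * t) := by
  intro t ht htm
  obtain ⟨c, hc1, hc2⟩ := EReal.lt_iff_exists_real_btwn.mp htm
  have htc : t < c := by exact_mod_cast hc1
  have hc0 : 0 ≤ c := le_of_lt (lt_of_le_of_lt ht htc)
  set clamp : ℝ → ℝ := fun r => min (max r (-(Δ : ℝ))) c with hclamp
  have hclamp_mem : ∀ r : ℝ, clamp r ∈ {s : ℝ | -(Δ : ℝ) ≤ s ∧ (s : EReal) < tmax} := by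
    intro r
    constructor
    · exact le_min (le_max_right _ _) (by linarith [neg_nonpos.mpr Δ.coe_nonneg])
    · exact lt_of_le_of_lt (EReal.coe_le_coe_iff.mpr (min_le_right _ _)) hc2
  have hclamp_cont : Continuous clamp := (continuous_id.max continuous_const).min continuous_const
  set g : ℝ → Vec n := fun r => x (clamp r) with hgdef
  have hg : Continuous g := hsol.cont.comp_continuous hclamp_cont hclamp_mem
  have hgx : ∀ r : ℝ, -(Δ : ℝ) ≤ r → r ≤ c → g r = x r := by
    intro r h1 h2
    have : clamp r = r := by
      rw [hclamp]
      simp only [max_eq_left h1, min_eq_left h2]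
    rw [hgdef]; simp only [this]
  set v : ℝ → ℝ := fun r => V (g r) with hvdef
  have hvcont : Continuous v := hV.continuous.comp hg
  set K : ℝ := a₂ * ‖x₀‖ ^ p with hK
  have hK0 : 0 ≤ K := mul_nonneg ha₂.le (Real.rpow_nonneg (norm_nonneg _) _)
  have hv0 : ∀ r : ℝ, r ≤ 0 → v r ≤ K := by
    intro r hr
    have h1 : max r (-(Δ : ℝ)) ≤ 0 := max_le hr (neg_nonpos.mpr Δ.coe_nonneg)
    have h2 : clamp r = max r (-(Δ : ℝ)) := min_eq_left (by linarith)
    have hmem : clamp r ∈ Icc (-(Δ : ℝ)) (0 : ℝ) :=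
      ⟨(hclamp_mem r).1, by rw [h2]; exact h1⟩
    have h3 : g r = x₀ ⟨clamp r, hmem⟩ := hsol.init ⟨clamp r, hmem⟩
    rw [hvdef]; simp only [h3]
    calc V (x₀ ⟨clamp r, hmem⟩) ≤ a₂ * ‖x₀ ⟨clamp r, hmem⟩‖ ^ p := hub _
      _ ≤ K := by
          rw [hK]
          exact mul_le_mul_of_nonneg_left
            (Real.rpow_le_rpow (norm_nonneg _) (ContinuousMap.norm_coe_le_norm _ _) hp.le)
            ha₂.le
  set F : ℝ → Vec n := fun s => f₀ (seg Δ g s) with hFdef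
  have hFc : Continuous F := (f0_cont hf).comp (continuous_seg hg)
  have hseg : ∀ s : ℝ, 0 ≤ s → s ≤ c → seg Δ x s = seg Δ g s := by
    intro s h1 h2
    refine seg_eq_of_eqOn hg s fun r hr => ?_
    exact (hgx r (by linarith [hr.1, neg_nonpos.mpr Δ.coe_nonneg, Δ.coe_nonneg])
      (by linarith [hr.2])).symm
  have hxeq : ∀ τ : ℝ, 0 ≤ τ → τ ≤ c → x τ = x 0 + ∫ s in (0:ℝ)..τ, F s := by
    intro τ h1 h2
    have h3 := hsol.integral_eq τ h1 (lt_of_le_of_lt (EReal.coe_le_coe_iff.mpr h2) hc2)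
    rw [h3]
    congr 1
    refine intervalIntegral.integral_congr fun s hs => ?_
    rw [uIcc_of_le h1] at hs
    show f₀ (seg Δ x s) = F s
    rw [hFdef]; simp only [hseg s hs.1 (hs.2.trans h2)]
  have hgder : ∀ τ : ℝ, 0 < τ → τ < c → HasDerivAt g (F τ) τ := by
    intro τ h1 h2
    have hprim : HasDerivAt (fun r => x 0 + ∫ s in (0:ℝ)..r, F s) (F τ) τ :=
      (intervalIntegral.integral_hasDerivAt_right (hFc.intervalIntegrable _ _)
        (hFc.stronglyMeasurableAtFilter _ _) hFc.continuousAt).const_add (x 0)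
    refine hprim.congr_of_eventuallyEq ?_
    filter_upwards [Ioo_mem_nhds h1 h2] with r hr
    rw [hgx r (by linarith [hr.1, neg_nonpos.mpr Δ.coe_nonneg]) hr.2.le]
    exact hxeq r hr.1.le hr.2.le
  have key : v t ≤ K * Real.exp (-lam * t) := by
    refine halanay_aux (DR := (Δ : ℝ)) (T := t) hlam hb hK0 hcmp hvcont hv0 ?_ t ht le_rfl
    intro t' h1 h2
    have hder : HasDerivAt v (fderiv ℝ V (g t') (F t')) t' :=
      ((hV.differentiable one_ne_zero (g t')).hasFDerivAt.comp_hasDerivAt t'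
        (hgder t' h1 (lt_of_le_of_lt h2 htc)))
    refine ⟨_, hder, fun C hC => ?_⟩
    have h0 := hHal (seg Δ g t')
    rw [ev0_seg hg] at h0
    have hsup : (⨆ τ : Icc (-(Δ : ℝ)) (0 : ℝ), V ((seg Δ g t') τ)) ≤ C := by
      refine ciSup_le fun τ => ?_
      rw [seg_apply hg]
      exact hC _ (by linarith [τ.2.1]) (by linarith [τ.2.2])
    have h4 : b * (⨆ τ : Icc (-(Δ : ℝ)) (0 : ℝ), V ((seg Δ g t') τ)) ≤ b * C :=
      mul_le_mul_of_nonneg_left hsup hb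
    have h5 : fderiv ℝ V (g t') (F t') ≤ -(a * V (g t')) + b * C := by linarith
    calc fderiv ℝ V (g t') (F t') ≤ -(a * V (g t')) + b * C := h5
      _ = -a * v t' + b * C := by rw [hvdef]; ring_nf
  have hvt : v t = V (x t) := by
    rw [hvdef]; simp only [hgx t (by linarith [Δ.coe_nonneg]) htc.le]
  rw [← hvt]
  exact key

end
noncomputable section
open Set Filter MeasureTheory Topology
open scoped NNReal

lemma norm_seg_le' {Δ : ℝ≥0} {n : ℕ} {x : ℝ → Vec n} {s C : ℝ}
    (hx : ContinuousOn x (Icc (s - (Δ : ℝ)) s)) (hC : 0 ≤ C)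
    (h : ∀ r ∈ Icc (s - (Δ : ℝ)) s, ‖x r‖ ≤ C) : ‖seg Δ x s‖ ≤ C := by
  rw [seg, dif_pos hx, ContinuousMap.norm_le _ hC]
  intro τ
  exact h _ (mem_Icc.mpr ⟨by linarith [τ.2.1], by linarith [τ.2.2]⟩)

lemma tmax_top (Δ : ℝ≥0) {n : ℕ} (f₀ : Hist Δ n → Vec n)
    (hf : LipOnBounded₀ f₀) (hf0 : f₀ 0 = 0)
    (x₀ : Hist Δ n) (tmax : EReal) (x : ℝ → Vec n)
    (hmax : IsMaxSolution Δ (fun φ (_ : Vec 0) => f₀ φ) (fun _ => 0) x₀ tmax x)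
    (R : ℝ) (hR0 : 0 ≤ R)
    (hxb : ∀ r : ℝ, -(Δ : ℝ) ≤ r → (r : EReal) < tmax → ‖x r‖ ≤ R) :
    tmax = ⊤ := by
  obtain ⟨hsol, hmaxim⟩ := hmax
  by_contra htop
  have hbot : tmax ≠ ⊥ := by
    intro h
    exact absurd (h ▸ hsol.tmax_pos) (by simp)
  lift tmax to ℝ using ⟨htop, hbot⟩ with T hT
  have hT0 : (0:ℝ) < T := by exact_mod_cast hsol.tmax_pos
  have hΔ0 : -(Δ : ℝ) ≤ 0 := neg_nonpos.mpr Δ.coe_nonneg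
  obtain ⟨L, hL, hLip⟩ := hf (R + 1) (by linarith)
  set M : ℝ := L * (R + 1) with hM
  have hM0 : 0 < M := by positivity
  have hcontsub : ∀ s : ℝ, 0 ≤ s → s < T → ContinuousOn x (Icc (s - (Δ : ℝ)) s) := by
    intro s h1 h2
    refine hsol.cont.mono fun r hr => ⟨by linarith [hr.1], ?_⟩
    exact EReal.coe_lt_coe_iff.mpr (lt_of_le_of_lt hr.2 h2)
  have hsegb : ∀ s : ℝ, 0 ≤ s → s < T → ‖seg Δ x s‖ ≤ R := by
    intro s h1 h2
    refine norm_seg_le' (hcontsub s h1 h2) hR0 fun r hr => ?_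
    exact hxb r (by linarith [hr.1]) (EReal.coe_lt_coe_iff.mpr (lt_of_le_of_lt hr.2 h2))
  have hfb : ∀ s : ℝ, 0 ≤ s → s < T → ‖f₀ (seg Δ x s)‖ ≤ M := by
    intro s h1 h2
    have h3 := f0_norm_le hf0 hLip (by linarith) ((hsegb s h1 h2).trans (by linarith))
    have h4 := hsegb s h1 h2
    nlinarith
  -- Lipschitz property of x on [0, T)
  have hxLip : ∀ s t : ℝ, 0 ≤ s → s ≤ t → t < T → ‖x t - x s‖ ≤ M * (t - s) := by
    intro s t h1 h2 h3
    have hs3 : s < T := lt_of_le_of_lt h2 h3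
    have hi1 : IntervalIntegrable (fun s => f₀ (seg Δ x s)) volume 0 s :=
      hsol.integrable s h1 (EReal.coe_lt_coe_iff.mpr hs3)
    have hi2 : IntervalIntegrable (fun s => f₀ (seg Δ x s)) volume s t :=
      (hsol.integrable t (h1.trans h2) (EReal.coe_lt_coe_iff.mpr h3)).mono_set
        (uIcc_subset_uIcc (by rw [uIcc_of_le (h1.trans h2)]; exact ⟨h1, h2⟩)
          (by rw [uIcc_of_le (h1.trans h2)]; exact ⟨h1.trans h2, le_rfl⟩))
    have he1 := hsol.integral_eq s h1 (EReal.coe_lt_coe_iff.mpr hs3)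
    have he2 := hsol.integral_eq t (h1.trans h2) (EReal.coe_lt_coe_iff.mpr h3)
    have hsub : x t - x s = ∫ r in s..t, f₀ (seg Δ x r) := by
      rw [he1, he2, ← intervalIntegral.integral_add_adjacent_intervals hi1 hi2]
      abel
    rw [hsub]
    have := intervalIntegral.norm_integral_le_of_norm_le_const (C := M)
      (f := fun r => f₀ (seg Δ x r)) (a := s) (b := t) ?_
    · rwa [abs_of_nonneg (by linarith)] at this
    · intro r hr
      rw [uIoc_of_le h2] at hr
      exact hfb r (by linarith [hr.1]) (lt_of_le_of_lt hr.2 h3)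
  -- limit at T
  set u : ℕ → ℝ := fun m => max (T / 2) (T - 1 / (m + 1)) with hu
  have hu0 : ∀ m, 0 ≤ u m := fun m => le_max_of_le_left (by linarith)
  have huT : ∀ m, u m < T := fun m =>
    max_lt (by linarith) (by
      have : (0:ℝ) < 1 / ((m:ℝ) + 1) := by positivity
      linarith)
  have hulb : ∀ N m : ℕ, N ≤ m → T - 1 / ((N:ℝ) + 1) ≤ u m := by
    intro N m hNm
    refine le_max_of_le_right ?_
    have h1 : 1 / ((m:ℝ) + 1) ≤ 1 / ((N:ℝ) + 1) := by
      apply one_div_le_one_div_of_le (by positivity)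
      exact_mod_cast Nat.succ_le_succ hNm
    linarith
  have hutend : Tendsto u atTop (𝓝 T) := by
    have h1 : Tendsto (fun m : ℕ => T - 1 / ((m:ℝ) + 1)) atTop (𝓝 (T - 0)) :=
      tendsto_const_nhds.sub tendsto_one_div_add_atTop_nhds_zero_nat
    have h2 := tendsto_const_nhds (x := T / 2) (f := atTop (α := ℕ)) |>.max h1
    rw [sub_zero] at h1 h2
    rwa [max_eq_right (by linarith)] at h2
  have hcauchy : CauchySeq (fun m => x (u m)) := by
    refine cauchySeq_of_le_tendsto_0 (fun N => M * (1 / ((N:ℝ) + 1))) ?_ ?_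
    · intro m m' N h1 h2
      rcases le_total (u m) (u m') with h | h
      · rw [dist_comm, dist_eq_norm]
        have := hxLip (u m) (u m') (hu0 m) h (huT m')
        have h4 := hulb N m h1
        have h5 := huT m'
        nlinarith
      · rw [dist_eq_norm]
        have := hxLip (u m') (u m) (hu0 m') h (huT m)
        have h4 := hulb N m' h2
        have h5 := huT m
        nlinarith
    · have := tendsto_one_div_add_atTop_nhds_zero_nat.const_mul M
      simpa using this
  obtain ⟨y, hy⟩ := cauchySeq_tendsto_of_complete hcauchy
  have hyR : ‖y‖ ≤ R := by
    refine le_of_tendsto hy.norm (Eventually.of_forall fun m => ?_)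
    exact hxb (u m) (by linarith [hu0 m]) (EReal.coe_lt_coe_iff.mpr (huT m))
  have hxy : ∀ s : ℝ, 0 ≤ s → s < T → ‖x s - y‖ ≤ M * (T - s) := by
    intro s h1 h2
    have h3 : Tendsto (fun m => ‖x s - x (u m)‖) atTop (𝓝 ‖x s - y‖) :=
      (tendsto_const_nhds.sub hy).norm
    refine le_of_tendsto h3 ?_
    filter_upwards [hutend.eventually_const_le h2] with m hm
    have h4 := hxLip s (u m) h1 hm (huT m)
    have h5 := huT m
    have h6 : ‖x s - x (u m)‖ = ‖x (u m) - x s‖ := norm_sub_rev _ _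
    nlinarith
  have hylim : Tendsto x (𝓝[<] T) (𝓝 y) := by
    rw [tendsto_iff_dist_tendsto_zero]
    have hg : Tendsto (fun s : ℝ => M * (T - s)) (𝓝[<] T) (𝓝 0) := by
      have h1 : Tendsto (fun s : ℝ => M * (T - s)) (𝓝 T) (𝓝 (M * (T - T))) :=
        tendsto_const_nhds.mul (tendsto_const_nhds.sub tendsto_id)
      rw [sub_self, mul_zero] at h1
      exact h1.mono_left nhdsWithin_le_nhds
    refine squeeze_zero' (Eventually.of_forall fun s => dist_nonneg) ?_ hg
    filter_upwards [Ioo_mem_nhdsLT_of_mem (show T ∈ Ioc 0 T from ⟨hT0, le_rfl⟩)]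
      with s hs
    rw [dist_eq_norm]
    exact hxy s hs.1.le hs.2
  -- glued extension base
  have hfpart_cont : ContinuousOn (fun r : ℝ => x (max r (-(Δ : ℝ)))) (Iio T) := by
    refine ContinuousOn.comp hsol.cont ((continuous_id.max continuous_const).continuousOn)
      fun r hr => ⟨le_max_right _ _, ?_⟩
    have h1 : max r (-(Δ : ℝ)) < T := max_lt hr (by linarith)
    exact EReal.coe_lt_coe_iff.mpr h1
  have hfpart_lim : Tendsto (fun r : ℝ => x (max r (-(Δ : ℝ)))) (𝓝[<] T) (𝓝 y) := by
    refine hylim.congr' ?_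
    filter_upwards [Ioo_mem_nhdsLT_of_mem (show T ∈ Ioc 0 T from ⟨hT0, le_rfl⟩)]
      with r hr
    rw [max_eq_left (by linarith [hr.1])]
  set xb : ℝ → Vec n := fun r => if r < T then x (max r (-(Δ : ℝ))) else y with hxbdef
  have hxbc : Continuous xb := by
    refine continuous_glue hfpart_cont ?_ continuousOn_const
    exact hfpart_lim
  have hxbT : xb T = y := if_neg (lt_irrefl T)
  have hxbx : ∀ r : ℝ, -(Δ : ℝ) ≤ r → r < T → xb r = x r := by
    intro r h1 h2
    rw [hxbdef]
    simp only [if_pos h2, max_eq_left h1]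
  set ψ : Hist Δ n := seg Δ xb T with hψdef
  have hψn : ‖ψ‖ ≤ R := by
    refine norm_seg_le hxbc hR0 fun r hr => ?_
    rcases lt_or_ge r T with h | h
    · rw [hxbdef]
      simp only [if_pos h]
      refine hxb _ (le_max_right _ _) (EReal.coe_lt_coe_iff.mpr (max_lt h (by linarith)))
    · have : r = T := le_antisymm hr.2 h
      rw [this, hxbT]
      exact hyR
  obtain ⟨ε, hε0, z, hzc, hzneg, hzeq⟩ := local_exist Δ f₀ hf hf0 ψ R hR0 hψn
  have hz0 : z 0 = y := by
    rw [hzneg 0 le_rfl, projIcc_of_mem _ (zero_mem_IccD Δ), hψdef]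
    show seg Δ xb T ⟨0, _⟩ = y
    rw [seg_apply hxbc, add_zero, hxbT]
  set x' : ℝ → Vec n := fun r => if r < T then x (max r (-(Δ : ℝ))) else z (r - T)
    with hx'def
  have hx'c : Continuous x' := by
    refine continuous_glue hfpart_cont ?_ ((hzc.comp (continuous_id.sub continuous_const)).continuousOn)
    rw [sub_self, hz0]
    exact hfpart_lim
  have hx'x : ∀ r : ℝ, -(Δ : ℝ) ≤ r → r < T → x' r = x r := by
    intro r h1 h2
    rw [hx'def]
    simp only [if_pos h2, max_eq_left h1]
  have hx'T : ∀ r : ℝ, T ≤ r → x' r = z (r - T) := by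
    intro r h1
    rw [hx'def]
    simp only [if_neg (not_lt.mpr h1)]
  have hkey : ∀ r : ℝ, -(Δ : ℝ) ≤ r → x' (T + r) = z r := by
    intro r h1
    rcases lt_or_ge r 0 with h | h
    · have h2 : T + r < T := by linarith
      rw [hx'def]
      simp only [if_pos h2]
      rw [hzneg r h.le, projIcc_of_mem _ ⟨h1, h.le⟩, hψdef]
      show _ = seg Δ xb T ⟨r, _⟩
      rw [seg_apply hxbc, hxbdef]
      simp only [if_pos h2]
    · rw [hx'T (T + r) (by linarith), add_sub_cancel_left]
  have hsegx' : ∀ s : ℝ, 0 ≤ s → seg Δ x' (T + s) = seg Δ z s := by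
    intro s h1
    refine ContinuousMap.ext fun τ => ?_
    rw [seg_apply hx'c, seg_apply hzc, add_assoc]
    exact hkey (s + τ.1) (by linarith [τ.2.1])
  set F' : ℝ → Vec n := fun s => f₀ (seg Δ x' s) with hF'def
  have hF'c : Continuous F' := (f0_cont hf).comp (continuous_seg hx'c)
  set J : ℝ → Vec n := fun t => x' 0 + ∫ s in (0:ℝ)..t, F' s with hJdef
  have hJc : Continuous J := continuous_const.add (continuous_primitive_vec hF'c)
  have hIco : EqOn x' J (Ico 0 T) := by
    rintro τ ⟨h1, h2⟩
    have h3 := hsol.integral_eq τ h1 (EReal.coe_lt_coe_iff.mpr h2)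
    have h4 : x' τ = x τ := hx'x τ (by linarith) h2
    have h5 : x' 0 = x 0 := hx'x 0 (by linarith) hT0
    rw [hJdef]
    show x' τ = x' 0 + ∫ s in (0:ℝ)..τ, F' s
    rw [h4, h5, h3]
    congr 1
    refine intervalIntegral.integral_congr fun s hs => ?_
    rw [uIcc_of_le h1] at hs
    show f₀ (seg Δ x s) = f₀ (seg Δ x' s)
    exact congrArg f₀ <| seg_eq_of_eqOn hx'c s fun r hr =>
      (hx'x r (by linarith [hr.1, hs.1]) (lt_of_le_of_lt hr.2 (lt_of_le_of_lt hs.2 h2))).symm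
  have hIcc : EqOn x' J (Icc 0 T) := by
    rw [← closure_Ico (ne_of_lt hT0)]
    exact hIco.closure hx'c hJc
  have hmain : ∀ t : ℝ, 0 ≤ t → t < T + ε → x' t = x' 0 + ∫ s in (0:ℝ)..t, F' s := by
    intro t h1 h2
    rcases lt_or_ge t T with h | h
    · exact hIco ⟨h1, h⟩
    · have h3 : 0 ≤ t - T := by linarith
      have h4 : t - T ≤ ε := by linarith
      have h5 : x' t = z (t - T) := hx'T t h
      have h6 := hzeq (t - T) h3 h4
      have hev0 : ev0 ψ = y := by
        rw [hψdef, ev0_seg hxbc, hxbT]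
      have h7 : (∫ s in (0:ℝ)..(t - T), f₀ (seg Δ z s)) = ∫ s in T..t, F' s := by
        have h8 : (∫ s in (0:ℝ)..(t - T), f₀ (seg Δ z s))
            = ∫ s in (0:ℝ)..(t - T), F' (T + s) := by
          refine intervalIntegral.integral_congr fun s hs => ?_
          rw [uIcc_of_le h3] at hs
          rw [hF'def]
          show f₀ (seg Δ z s) = f₀ (seg Δ x' (T + s))
          rw [hsegx' s hs.1]
        rw [h8]
        have h9 := intervalIntegral.integral_comp_add_left (a := (0:ℝ)) (b := t - T) F' T
        rw [add_zero, add_sub_cancel] at h9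
        exact h9
      have h10 : x' T = x' 0 + ∫ s in (0:ℝ)..T, F' s := hIcc ⟨hT0.le, le_rfl⟩
      have h11 : x' T = y := by rw [hx'T T le_rfl, sub_self, hz0]
      have h12 : (∫ s in (0:ℝ)..T, F' s) + ∫ s in T..t, F' s = ∫ s in (0:ℝ)..t, F' s :=
        intervalIntegral.integral_add_adjacent_intervals
          (hF'c.intervalIntegrable _ _) (hF'c.intervalIntegrable _ _)
      rw [h5, h6, hev0, h7, ← h11, h10, ← h12]
      abel
  have hx'sol : IsSolution Δ (fun φ (_ : Vec 0) => f₀ φ) (fun _ => 0) x₀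
      (((T + ε : ℝ) : EReal)) x' := by
    refine ⟨?_, hx'c.continuousOn, ?_, ?_, ?_⟩
    · exact_mod_cast (by linarith : (0:ℝ) < T + ε)
    · intro τ
      rw [hx'x τ.1 τ.2.1 (lt_of_le_of_lt τ.2.2 hT0)]
      exact hsol.init τ
    · intro t h1 h2
      exact hF'c.intervalIntegrable 0 t
    · intro t h1 h2
      exact hmain t h1 (by exact_mod_cast h2)
  have hle := hmaxim ((T + ε : ℝ) : EReal) x' hx'sol
    (fun r h1 h2 => hx'x r h1 (by exact_mod_cast h2))
  rw [EReal.coe_le_coe_iff] at hle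
  linarith

end
open Set Filter MeasureTheory Topology
open scoped NNReal

/-- GES through Halanay's inequality. -/
theorem ges_halanay
    (Δ : ℝ≥0) (n : ℕ) (f₀ : Hist Δ n → Vec n)
    (hf : LipOnBounded₀ f₀) (hf0 : f₀ 0 = 0)
    (V : Vec n → ℝ) (hV : ContDiff ℝ 1 V) (hVnonneg : ∀ z : Vec n, 0 ≤ V z)
    (a₁ a₂ p : ℝ) (ha₁ : 0 < a₁) (ha₂ : 0 < a₂) (hp : 0 < p)
    (hsand : ∀ z : Vec n, a₁ * ‖z‖ ^ p ≤ V z ∧ V z ≤ a₂ * ‖z‖ ^ p)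
    (a b : ℝ) (ha : 0 < a) (hb : 0 < b)
    (hHal : ∀ φ : Hist Δ n,
      fderiv ℝ V (ev0 φ) (f₀ φ)
        ≤ -(a * V (ev0 φ)) + b * ⨆ τ : Icc (-(Δ : ℝ)) (0 : ℝ), V (φ τ))
    (hab : b < a) :
    GES Δ f₀ := by
  -- choose the decay rate `lam` for the Halanay comparison
  obtain ⟨lam, hlam, hcmp⟩ : ∃ lam : ℝ, 0 < lam ∧
      -a + b * Real.exp (lam * (Δ : ℝ)) < -lam := by
    have c1 : Continuous fun l : ℝ => l + b * Real.exp (l * (Δ : ℝ)) := by continuity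
    have hcont : Tendsto (fun l : ℝ => l + b * Real.exp (l * (Δ : ℝ))) (𝓝[>] 0)
        (𝓝 ((fun l : ℝ => l + b * Real.exp (l * (Δ : ℝ))) 0)) :=
      (c1.tendsto 0).mono_left nhdsWithin_le_nhds
    have hval : (fun l : ℝ => l + b * Real.exp (l * (Δ : ℝ))) 0 = b := by
      norm_num
    rw [hval] at hcont
    have hev := hcont.eventually_lt_const hab
    obtain ⟨lam, h1, h2⟩ := (hev.and self_mem_nhdsWithin).exists
    exact ⟨lam, h2, by linarith⟩
  set k : ℝ := max 1 ((a₂ / a₁) ^ (p⁻¹ : ℝ)) with hk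
  have hk1 : (1:ℝ) ≤ k := le_max_left _ _
  refine ⟨k, hk1, lam / p, div_pos hlam hp, ?_⟩
  intro x₀ tmax x hmax
  obtain ⟨hsol, hmaxim⟩ := hmax
  have hest := sol_V_est Δ f₀ hf V hV a₂ p ha₂ hp (fun z => (hsand z).2)
    a b lam hb.le hlam hcmp hHal x₀ tmax x hsol
  have hnorm : ∀ t : ℝ, 0 ≤ t → (t : EReal) < tmax →
      ‖x t‖ ≤ k * ‖x₀‖ * Real.exp (-(lam / p) * t) := by
    intro t ht htm
    have h1 := (hsand (x t)).1
    have h2 := hest t ht htm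
    have hE : (0:ℝ) < Real.exp (-lam * t) := Real.exp_pos _
    have h3 : ‖x t‖ ^ p ≤ a₂ / a₁ * ‖x₀‖ ^ p * Real.exp (-lam * t) := by
      rw [div_mul_eq_mul_div, div_mul_eq_mul_div, le_div_iff₀ ha₁]
      nlinarith
    have h4 : ‖x t‖ = (‖x t‖ ^ p) ^ (p⁻¹ : ℝ) :=
      (Real.rpow_rpow_inv (norm_nonneg _) (ne_of_gt hp)).symm
    have h5 : ‖x t‖ ≤ (a₂ / a₁ * ‖x₀‖ ^ p * Real.exp (-lam * t)) ^ (p⁻¹ : ℝ) := by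
      rw [h4]
      exact Real.rpow_le_rpow (Real.rpow_nonneg (norm_nonneg _) _) h3
        (by positivity)
    have h6 : (a₂ / a₁ * ‖x₀‖ ^ p * Real.exp (-lam * t)) ^ (p⁻¹ : ℝ)
        = (a₂ / a₁) ^ (p⁻¹ : ℝ) * ‖x₀‖ * Real.exp (-(lam / p) * t) := by
      rw [Real.mul_rpow (by positivity) hE.le,
        Real.mul_rpow (by positivity) (Real.rpow_nonneg (norm_nonneg _) _),
        Real.rpow_rpow_inv (norm_nonneg _) (ne_of_gt hp), ← Real.exp_mul]
      congr 1
      field_simp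
    rw [h6] at h5
    refine h5.trans ?_
    have h7 : (a₂ / a₁) ^ (p⁻¹ : ℝ) ≤ k := le_max_right _ _
    have h8 : (0:ℝ) ≤ ‖x₀‖ * Real.exp (-(lam / p) * t) := by positivity
    nlinarith [Real.rpow_nonneg (show (0:ℝ) ≤ a₂ / a₁ by positivity) (p⁻¹ : ℝ)]
  have hR0 : (0:ℝ) ≤ k * ‖x₀‖ :=
    mul_nonneg (le_trans zero_le_one hk1) (norm_nonneg _)
  have hxb : ∀ r : ℝ, -(Δ : ℝ) ≤ r → (r : EReal) < tmax → ‖x r‖ ≤ k * ‖x₀‖ := by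
    intro r h1 h2
    rcases lt_or_ge r 0 with h | h
    · have hmem : r ∈ Icc (-(Δ : ℝ)) (0:ℝ) := ⟨h1, h.le⟩
      rw [hsol.init ⟨r, hmem⟩]
      calc ‖x₀ ⟨r, hmem⟩‖ ≤ ‖x₀‖ := ContinuousMap.norm_coe_le_norm _ _
        _ ≤ k * ‖x₀‖ := le_mul_of_one_le_left (norm_nonneg _) hk1
    · have h3 := hnorm r h h2
      have h4 : Real.exp (-(lam / p) * r) ≤ 1 := by
        rw [Real.exp_le_one_iff]
        have : 0 < lam / p := div_pos hlam hp
        nlinarith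
      have h5 : (0:ℝ) < Real.exp (-(lam / p) * r) := Real.exp_pos _
      nlinarith
  have htop : tmax = ⊤ :=
    tmax_top Δ f₀ hf hf0 x₀ tmax x ⟨hsol, hmaxim⟩ (k * ‖x₀‖) hR0 hxb
  refine ⟨htop, fun t ht => ?_⟩
  exact hnorm t ht (htop ▸ EReal.coe_lt_top t)
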